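/- (Proposition 5.1(ii) of the paper, Kolmogorov pseudo-metric.) Let L > 0 and let u : T → ℝ be Lipschitz with modulus L with respect to the ℓ¹-norm, and let u_N be the Type-1 piecewise linear function built from the grid values u_{i,j} := u(x_i,y_j). Then d_I(u, u_N) ≤ 2L(β₁ + β₂), where β₁ := max_{1≤i≤N₁−1}(x_{i+1}−x_i) and β₂ := max_{1≤j≤N₂−1}(y_{j+1}−y_j). -/

import Mathlib

/-!
On a triangle of a cell, `u_N` is the convex combination of the values of `u` at the three
vertices with barycentric weights `1 - s, s - t, t` (local coordinates `s, t ∈ [0,1]`), so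
`|u - u_N| ≤ Σ wₖ L ‖(p,q) - Vₖ‖₁ = 2L (s(1-s) Δx + t(1-t) Δy)`. Each summand is at most a
quarter of the mesh size and vanishes when the point lies on the edge `x = x₁` (resp. `y = y₁`)
of `T`. The cross-difference of `u - u_N` over `[x₁,p] × [y₁,q]` is a signed sum of the errors
at the four corners, and these bounds add up to `L(β₁ + β₂) ≤ 2L(β₁ + β₂)`.
-/

open Finset Set
open scoped Classical

noncomputable section

/-- Lower-triangle linear piece of the Type-1 PLA over cell `(i,j)`. -/
def u1l (x y : ℕ → ℝ) (u : ℕ → ℕ → ℝ) (i j : ℕ) (p q : ℝ) : ℝ :=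
  ((x (i + 1) - p) / (x (i + 1) - x i)) * u i j
    + ((p - x i) / (x (i + 1) - x i) - (q - y j) / (y (j + 1) - y j)) * u (i + 1) j
    + ((q - y j) / (y (j + 1) - y j)) * u (i + 1) (j + 1)

/-- Upper-triangle linear piece of the Type-1 PLA over cell `(i,j)`. -/
def u1u (x y : ℕ → ℝ) (u : ℕ → ℕ → ℝ) (i j : ℕ) (p q : ℝ) : ℝ :=
  ((y (j + 1) - q) / (y (j + 1) - y j)) * u i j
    + ((q - y j) / (y (j + 1) - y j) - (p - x i) / (x (i + 1) - x i)) * u i (j + 1)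
    + ((p - x i) / (x (i + 1) - x i)) * u (i + 1) (j + 1)

/-- Membership in the half-open interval `X_i` (closed at the left end for `i = 1`). -/
def memX (x : ℕ → ℝ) (i : ℕ) (p : ℝ) : Prop :=
  if i = 1 then x 1 ≤ p ∧ p ≤ x 2 else x i < p ∧ p ≤ x (i + 1)

/-- Membership in the cell `T_{i,j} = X_i × Y_j`. -/
def memCell (x y : ℕ → ℝ) (i j : ℕ) (p q : ℝ) : Prop :=
  memX x i p ∧ memX y j q

/-- The Type-1 piecewise linear function built from the grid values `u i j`. -/
def uPL (N₁ N₂ : ℕ) (x y : ℕ → ℝ) (u : ℕ → ℕ → ℝ) (p q : ℝ) : ℝ :=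
  ∑ i ∈ Finset.Icc 1 (N₁ - 1), ∑ j ∈ Finset.Icc 1 (N₂ - 1),
    if memCell x y i j p q then
      (if (q - y j) * (x (i + 1) - x i) ≤ (p - x i) * (y (j + 1) - y j)
        then u1l x y u i j p q else u1u x y u i j p q)
    else 0

section Grid

variable {x : ℕ → ℝ} {N : ℕ}

lemma strictMonoOn_Icc_of_lt_succ (hx : ∀ i, 1 ≤ i → i < N → x i < x (i + 1)) :
    StrictMonoOn x (Set.Icc 1 N) :=
  strictMonoOn_of_lt_succ Set.ordConnected_Icc fun i _ hi hi' => by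
    rw [Order.succ_eq_add_one] at hi' ⊢
    exact hx i hi.1 hi'.2

lemma memX.mem_Icc {i : ℕ} {p : ℝ} (h : memX x i p) : p ∈ Set.Icc (x i) (x (i + 1)) := by
  unfold memX at h
  split_ifs at h with hi
  · subst hi; exact h
  · exact ⟨h.1.le, h.2⟩

lemma exists_memX (hN : 2 ≤ N) {p : ℝ} (hp : p ∈ Set.Icc (x 1) (x N)) :
    ∃ i ∈ Finset.Icc 1 (N - 1), memX x i p := by
  have hlast : 1 ≤ N - 1 ∧ p ≤ x (N - 1 + 1) := ⟨by omega, Nat.sub_add_cancel (by omega) ▸ hp.2⟩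
  have hex : ∃ i, 1 ≤ i ∧ p ≤ x (i + 1) := ⟨N - 1, hlast⟩
  obtain ⟨hm1, hm⟩ := Nat.find_spec hex
  refine ⟨Nat.find hex, Finset.mem_Icc.2 ⟨hm1, Nat.find_min' hex hlast⟩, ?_⟩
  unfold memX
  split_ifs with h1
  · rw [h1] at hm; exact ⟨hp.1, hm⟩
  · refine ⟨?_, hm⟩
    have := Nat.find_min hex (m := Nat.find hex - 1) (by omega)
    push Not at this
    simpa [Nat.sub_add_cancel hm1] using this (by omega)

lemma eq_of_memX_of_memX (hx : MonotoneOn x (Set.Icc 1 N)) {i i' : ℕ} {p : ℝ}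
    (hi : i ∈ Finset.Icc 1 (N - 1)) (hi' : i' ∈ Finset.Icc 1 (N - 1))
    (h : memX x i p) (h' : memX x i' p) : i = i' := by
  simp only [Finset.mem_Icc] at hi hi'
  wlog hlt : i < i' generalizing i i'
  · rcases (not_lt.1 hlt).eq_or_lt with heq | hgt
    · exact heq.symm
    · exact (this h' h hi' hi hgt).symm
  have hlt' : x i' < p := by
    unfold memX at h'; exact (if_neg (by omega : i' ≠ 1) ▸ h').1
  have : x (i + 1) ≤ x i' := hx ⟨by omega, by omega⟩ ⟨by omega, by omega⟩ (by omega)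
  linarith [h.mem_Icc.2]

lemma Icc_subset_Icc_of_mem_grid {i : ℕ} (hx : MonotoneOn x (Set.Icc 1 N))
    (hi : i ∈ Finset.Icc 1 (N - 1)) : Set.Icc (x i) (x (i + 1)) ⊆ Set.Icc (x 1) (x N) := by
  rw [Finset.mem_Icc] at hi
  exact Set.Icc_subset_Icc (hx ⟨le_rfl, by omega⟩ ⟨hi.1, by omega⟩ hi.1)
    (hx ⟨by omega, by omega⟩ ⟨by omega, le_rfl⟩ (by omega))

end Grid

lemma uPL_eq_of_memCell {N₁ N₂ : ℕ} {x y : ℕ → ℝ} (hx : MonotoneOn x (Set.Icc 1 N₁))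
    (hy : MonotoneOn y (Set.Icc 1 N₂)) (g : ℕ → ℕ → ℝ) {i j : ℕ} {p q : ℝ}
    (hi : i ∈ Finset.Icc 1 (N₁ - 1)) (hj : j ∈ Finset.Icc 1 (N₂ - 1))
    (hc : memCell x y i j p q) :
    uPL N₁ N₂ x y g p q =
      if (q - y j) * (x (i + 1) - x i) ≤ (p - x i) * (y (j + 1) - y j)
        then u1l x y g i j p q else u1u x y g i j p q := by
  unfold uPL
  rw [Finset.sum_eq_single_of_mem i hi fun i' hi' hne => Finset.sum_eq_zero fun j' _ =>
      if_neg fun hc' => hne (eq_of_memX_of_memX hx hi' hi hc'.1 hc.1),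
    Finset.sum_eq_single_of_mem j hj fun j' hj' hne =>
      if_neg fun hc' => hne (eq_of_memX_of_memX hy hj' hj hc'.2 hc.2),
    if_pos hc]

lemma abs_sub_convex_comb_le {z a₁ a₂ a₃ w₁ w₂ w₃ : ℝ} (h₁ : 0 ≤ w₁) (h₂ : 0 ≤ w₂) (h₃ : 0 ≤ w₃)
    (hw : w₁ + w₂ + w₃ = 1) :
    |z - (w₁ * a₁ + w₂ * a₂ + w₃ * a₃)| ≤ w₁ * |z - a₁| + w₂ * |z - a₂| + w₃ * |z - a₃| := by
  have hz : z - (w₁ * a₁ + w₂ * a₂ + w₃ * a₃)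
      = w₁ * (z - a₁) + w₂ * (z - a₂) + w₃ * (z - a₃) := by
    linear_combination z * hw.symm
  rw [hz]
  calc _ ≤ |w₁ * (z - a₁)| + |w₂ * (z - a₂)| + |w₃ * (z - a₃)| := abs_add_three _ _ _
    _ = _ := by rw [abs_mul, abs_mul, abs_mul, abs_of_nonneg h₁, abs_of_nonneg h₂, abs_of_nonneg h₃]

lemma abs_sub_lowerTriangleInterp_le {f : ℝ → ℝ → ℝ} {L a b c d p q : ℝ}
    (hab : a < b) (hcd : c < d) (hp : p ∈ Set.Icc a b) (hq : q ∈ Set.Icc c d)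
    (hlow : (q - c) * (b - a) ≤ (p - a) * (d - c))
    (hlip : ∀ a' ∈ Set.Icc a b, ∀ c' ∈ Set.Icc c d,
      |f p q - f a' c'| ≤ L * (|p - a'| + |q - c'|)) :
    |f p q - ((b - p) / (b - a) * f a c + ((p - a) / (b - a) - (q - c) / (d - c)) * f b c
        + (q - c) / (d - c) * f b d)|
      ≤ 2 * L * ((p - a) * (b - p) / (b - a) + (q - c) * (d - q) / (d - c)) := by
  obtain ⟨hpa, hpb⟩ := hp
  obtain ⟨hqc, hqd⟩ := hq
  have hS : 0 < b - a := sub_pos.2 hab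
  have hD : 0 < d - c := sub_pos.2 hcd
  have hweight : (b - p) / (b - a) = 1 - (p - a) / (b - a) := by
    rw [one_sub_div hS.ne']; congr 1; ring
  rw [hweight]
  set s := (p - a) / (b - a)
  set t := (q - c) / (d - c)
  have hps : p - a = s * (b - a) := (div_mul_cancel₀ _ hS.ne').symm
  have hqt : q - c = t * (d - c) := (div_mul_cancel₀ _ hD.ne').symm
  have hts : t ≤ s := (div_le_div_iff₀ hD hS).2 hlow
  have hs : s ≤ 1 := (div_le_one hS).2 (by linarith)
  have ht : 0 ≤ t := div_nonneg (by linarith) hD.le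
  have hbp : b - p = (1 - s) * (b - a) := by linear_combination -hps
  have hdq : d - q = (1 - t) * (d - c) := by linear_combination -hqt
  have h₀ : |f p q - f a c| ≤ L * (s * (b - a) + t * (d - c)) :=
    (hlip a ⟨le_rfl, hab.le⟩ c ⟨le_rfl, hcd.le⟩).trans_eq <| by
      rw [abs_of_nonneg (by linarith), abs_of_nonneg (by linarith), hps, hqt]
  have h₁ : |f p q - f b c| ≤ L * ((1 - s) * (b - a) + t * (d - c)) :=
    (hlip b ⟨hab.le, le_rfl⟩ c ⟨le_rfl, hcd.le⟩).trans_eq <| by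
      rw [abs_sub_comm p, abs_of_nonneg (by linarith), abs_of_nonneg (by linarith), hbp, hqt]
  have h₂ : |f p q - f b d| ≤ L * ((1 - s) * (b - a) + (1 - t) * (d - c)) :=
    (hlip b ⟨hab.le, le_rfl⟩ d ⟨hcd.le, le_rfl⟩).trans_eq <| by
      rw [abs_sub_comm p, abs_sub_comm q, abs_of_nonneg (by linarith), abs_of_nonneg (by linarith),
        hbp, hdq]
  have hbound : (p - a) * (b - p) / (b - a) + (q - c) * (d - q) / (d - c)
      = s * (1 - s) * (b - a) + t * (1 - t) * (d - c) := by
    rw [hbp, hdq, hps, hqt]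
    field_simp
  rw [hbound]
  calc _ ≤ (1 - s) * |f p q - f a c| + (s - t) * |f p q - f b c| + t * |f p q - f b d| :=
        abs_sub_convex_comb_le (by linarith) (by linarith) ht (by ring)
    _ ≤ (1 - s) * (L * (s * (b - a) + t * (d - c)))
        + (s - t) * (L * ((1 - s) * (b - a) + t * (d - c)))
        + t * (L * ((1 - s) * (b - a) + (1 - t) * (d - c))) := by
      gcongr
    _ = _ := by ring

lemma abs_sub_type1Piece_le (x y : ℕ → ℝ) (f : ℝ → ℝ → ℝ) (i j : ℕ) {L p q : ℝ}
    (hx : x i < x (i + 1)) (hy : y j < y (j + 1))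
    (hp : p ∈ Set.Icc (x i) (x (i + 1))) (hq : q ∈ Set.Icc (y j) (y (j + 1)))
    (hlip : ∀ a ∈ Set.Icc (x i) (x (i + 1)), ∀ b ∈ Set.Icc (y j) (y (j + 1)),
      |f p q - f a b| ≤ L * (|p - a| + |q - b|)) :
    |f p q - (if (q - y j) * (x (i + 1) - x i) ≤ (p - x i) * (y (j + 1) - y j)
        then u1l x y (fun i j => f (x i) (y j)) i j p q
        else u1u x y (fun i j => f (x i) (y j)) i j p q)|
      ≤ 2 * L * ((p - x i) * (x (i + 1) - p) / (x (i + 1) - x i)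
        + (q - y j) * (y (j + 1) - q) / (y (j + 1) - y j)) := by
  split_ifs with hlow
  · exact abs_sub_lowerTriangleInterp_le hx hy hp hq hlow hlip
  · -- the upper triangle is the lower triangle of the transposed grid
    rw [add_comm]
    exact abs_sub_lowerTriangleInterp_le (f := fun q p => f p q) hy hx hq hp
      (by linarith [not_le.1 hlow]) fun b hb a ha => add_comm |p - a| _ ▸ hlip a ha b hb

lemma mul_sub_div_sub_le_min {a b p : ℝ} (hab : a < b) (hp : p ∈ Set.Icc a b) :
    (p - a) * (b - p) / (b - a) ≤ min (p - a) ((b - a) / 4) := by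
  have hS : 0 < b - a := sub_pos.2 hab
  refine le_min ?_ ?_ <;> rw [div_le_iff₀ hS]
  · nlinarith [hp.1, hp.2]
  · nlinarith [sq_nonneg (2 * p - a - b)]

lemma abs_sub_uPL_le {N₁ N₂ : ℕ} (hN₁ : 2 ≤ N₁) (hN₂ : 2 ≤ N₂) {x y : ℕ → ℝ}
    (hx : StrictMonoOn x (Set.Icc 1 N₁)) (hy : StrictMonoOn y (Set.Icc 1 N₂))
    {L β₁ β₂ : ℝ} (hL : 0 ≤ L) (u : ℝ → ℝ → ℝ)
    (hlip : ∀ p p' q q', p ∈ Set.Icc (x 1) (x N₁) → p' ∈ Set.Icc (x 1) (x N₁) →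
      q ∈ Set.Icc (y 1) (y N₂) → q' ∈ Set.Icc (y 1) (y N₂) →
      |u p q - u p' q'| ≤ L * (|p - p'| + |q - q'|))
    (hβ₁ : ∀ i ∈ Finset.Icc 1 (N₁ - 1), x (i + 1) - x i ≤ β₁)
    (hβ₂ : ∀ j ∈ Finset.Icc 1 (N₂ - 1), y (j + 1) - y j ≤ β₂)
    ⦃p q : ℝ⦄ (hp : p ∈ Set.Icc (x 1) (x N₁)) (hq : q ∈ Set.Icc (y 1) (y N₂)) :
    |u p q - uPL N₁ N₂ x y (fun i j => u (x i) (y j)) p q|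
      ≤ 2 * L * (min (p - x 1) (β₁ / 4) + min (q - y 1) (β₂ / 4)) := by
  obtain ⟨i, hi, hpi⟩ := exists_memX hN₁ hp
  obtain ⟨j, hj, hqj⟩ := exists_memX hN₂ hq
  have hxi : x i < x (i + 1) := by
    rw [Finset.mem_Icc] at hi
    exact hx ⟨hi.1, by omega⟩ ⟨by omega, by omega⟩ (lt_add_one i)
  have hyj : y j < y (j + 1) := by
    rw [Finset.mem_Icc] at hj
    exact hy ⟨hj.1, by omega⟩ ⟨by omega, by omega⟩ (lt_add_one j)
  have hcellx := Icc_subset_Icc_of_mem_grid hx.monotoneOn hi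
  have hcelly := Icc_subset_Icc_of_mem_grid hy.monotoneOn hj
  rw [uPL_eq_of_memCell hx.monotoneOn hy.monotoneOn _ hi hj ⟨hpi, hqj⟩]
  refine (abs_sub_type1Piece_le x y u i j hxi hyj hpi.mem_Icc hqj.mem_Icc
    fun a ha b hb => hlip p a q b hp (hcellx ha) hq (hcelly hb)).trans ?_
  gcongr
  · refine (mul_sub_div_sub_le_min hxi hpi.mem_Icc).trans (min_le_min ?_ ?_)
    · linarith [(hcellx (Set.left_mem_Icc.2 hxi.le)).1]
    · linarith [hβ₁ i hi]
  · refine (mul_sub_div_sub_le_min hyj hqj.mem_Icc).trans (min_le_min ?_ ?_)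
    · linarith [(hcelly (Set.left_mem_Icc.2 hyj.le)).1]
    · linarith [hβ₂ j hj]

lemma abs_cross_diff_sub_le (a b c d a' b' c' d' : ℝ) :
    |(a - b - c + d) - (a' - b' - c' + d')| ≤ |a - a'| + |b - b'| + |c - c'| + |d - d'| := by
  rw [show (a - b - c + d) - (a' - b' - c' + d')
    = (a - a') - (b - b') - (c - c') + (d - d') by ring]
  calc _ ≤ |(a - a') - (b - b') - (c - c')| + |d - d'| := abs_add_le _ _
    _ ≤ |(a - a') - (b - b')| + |c - c'| + |d - d'| := by gcongr; exact abs_sub _ _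
    _ ≤ _ := by gcongr; exact abs_sub _ _

/-- Proposition 5.1(ii): the Kolmogorov pseudo-metric `d_I` between an ℓ¹-Lipschitz function
`u` and its Type-1 piecewise linear approximation is at most `2L(β₁ + β₂)`; `d_I(u,v) ≤ c` is
expressed by the equivalent pointwise bound on the difference of the cross-differences over
`[x₁,p] × [y₁,q]` for every `(p,q) ∈ T`. -/
theorem type1_PLA_kolmogorov_bound
    (N₁ N₂ : ℕ) (hN₁ : 2 ≤ N₁) (hN₂ : 2 ≤ N₂)
    (x y : ℕ → ℝ)
    (hx : ∀ i, 1 ≤ i → i < N₁ → x i < x (i + 1))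
    (hy : ∀ j, 1 ≤ j → j < N₂ → y j < y (j + 1))
    (L : ℝ) (hL : 0 < L)
    (u : ℝ → ℝ → ℝ)
    (hlip : ∀ p p' q q', p ∈ Set.Icc (x 1) (x N₁) → p' ∈ Set.Icc (x 1) (x N₁) →
      q ∈ Set.Icc (y 1) (y N₂) → q' ∈ Set.Icc (y 1) (y N₂) →
      |u p q - u p' q'| ≤ L * (|p - p'| + |q - q'|)) :
    let β₁ := (Finset.Icc 1 (N₁ - 1)).sup' (Finset.nonempty_Icc.mpr (by omega))
      (fun i => x (i + 1) - x i)
    let β₂ := (Finset.Icc 1 (N₂ - 1)).sup' (Finset.nonempty_Icc.mpr (by omega))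
      (fun j => y (j + 1) - y j)
    let uN := uPL N₁ N₂ x y (fun i j => u (x i) (y j))
    ∀ p ∈ Set.Icc (x 1) (x N₁), ∀ q ∈ Set.Icc (y 1) (y N₂),
      |(u p q - u p (y 1) - u (x 1) q + u (x 1) (y 1))
          - (uN p q - uN p (y 1) - uN (x 1) q + uN (x 1) (y 1))|
        ≤ 2 * L * (β₁ + β₂) := by
  intro β₁ β₂ uN p hp q hq
  have hβ₁ : ∀ i ∈ Finset.Icc 1 (N₁ - 1), x (i + 1) - x i ≤ β₁ := fun i hi =>
    Finset.le_sup' (fun i => x (i + 1) - x i) hi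
  have hβ₂ : ∀ j ∈ Finset.Icc 1 (N₂ - 1), y (j + 1) - y j ≤ β₂ := fun j hj =>
    Finset.le_sup' (fun j => y (j + 1) - y j) hj
  have hβ₁₀ : 0 ≤ β₁ := by linarith [hx 1 le_rfl (by omega), hβ₁ 1 (by simp; omega)]
  have hβ₂₀ : 0 ≤ β₂ := by linarith [hy 1 le_rfl (by omega), hβ₂ 1 (by simp; omega)]
  have herr := abs_sub_uPL_le hN₁ hN₂ (strictMonoOn_Icc_of_lt_succ hx)
    (strictMonoOn_Icc_of_lt_succ hy) hL.le u hlip hβ₁ hβ₂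
  have hx₁ : x 1 ∈ Set.Icc (x 1) (x N₁) := ⟨le_rfl, hp.1.trans hp.2⟩
  have hy₁ : y 1 ∈ Set.Icc (y 1) (y N₂) := ⟨le_rfl, hq.1.trans hq.2⟩
  have e₁ := herr hp hq
  have e₂ := herr hp hy₁
  have e₃ := herr hx₁ hq
  have e₄ := herr hx₁ hy₁
  simp only [sub_self, min_eq_left (by linarith : (0 : ℝ) ≤ β₁ / 4),
    min_eq_left (by linarith : (0 : ℝ) ≤ β₂ / 4)] at e₂ e₃ e₄
  refine (abs_cross_diff_sub_le _ _ _ _ _ _ _ _).trans ?_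
  linarith [mul_le_mul_of_nonneg_left (min_le_right (p - x 1) (β₁ / 4)) hL.le,
    mul_le_mul_of_nonneg_left (min_le_right (q - y 1) (β₂ / 4)) hL.le,
    mul_nonneg hL.le hβ₁₀, mul_nonneg hL.le hβ₂₀]

end
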